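/- arXiv:math/0611129 — 6 statements merged into one kernel-verified Lean document; each statement's English description precedes it below -/
import Mathlib

section
/- Let n and k be positive integers with k even and 3k = 2n + 2. Let V be a complex vector space of dimension 2n + 1 equipped with a nondegenerate symmetric bilinear form B, and let x be a B-skew-adjoint nilpotent endomorphism of V of Jordan type [3^{k-2}, 2^2, 1] (equivalently, x^3 = 0, rank(x^2) = k - 2, and rank(x) = 2k - 2). Then there exists exactly one pair (F_1, F_2) of linear subspaces of V such that F_1 ⊆ F_2, dim F_1 = k, F_2 is the orthogonal complement of F_1 with respect to B, x(F_1) = 0, x(F_2) ⊆ F_1, and x(V) ⊆ F_2. -/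
/-!
Skew-adjointness gives `(ker x)^⊥ = range x`, so `R = ker x ⊓ range x` is the radical of `B`
restricted to `ker x`; the rank conditions make it a hyperplane of `ker x` of dimension `k`.
Hence every isotropic vector of `ker x` lies in `R`, which forces `F₁ = R`. Conversely
`(R, R^⊥)` is admissible: `x (R^⊥) ⊆ R` because `x²` is `B`-self-adjoint and maps `V` into `R`
(as `x³ = 0`).
-/

open Module Submodule LinearMap

section

variable {K V : Type*} [Field K] [AddCommGroup V] [Module K V]

theorem Submodule.finrank_map_add_finrank_ker_inf [FiniteDimensional K V] {W : Type*}
    [AddCommGroup W] [Module K W] (f : V →ₗ[K] W) (p : Submodule K V) :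
    finrank K (p.map f) + finrank K (ker f ⊓ p : Submodule K V) = finrank K p := by
  rw [← range_domRestrict, ← (f.domRestrict p).finrank_range_add_finrank_ker, ker_domRestrict,
    ← (comapSubtypeEquivOfLe (inf_le_right : ker f ⊓ p ≤ p)).finrank_eq, comap_inf,
    comap_subtype_self, inf_top_eq]

theorem Submodule.sup_span_singleton_eq_of_finrank_eq_succ [FiniteDimensional K V]
    {p q : Submodule K V} (hpq : p ≤ q) (h : finrank K q = finrank K p + 1) {v : V} (hvq : v ∈ q)
    (hvp : v ∉ p) : p ⊔ K ∙ v = q := by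
  have hlt : p < p ⊔ K ∙ v :=
    lt_of_le_of_ne le_sup_left fun h => hvp <| h ▸ mem_sup_right (mem_span_singleton_self v)
  have := finrank_lt_finrank_of_lt hlt
  exact eq_of_le_of_finrank_le (sup_le hpq ((span_singleton_le_iff_mem v q).2 hvq)) (by omega)

namespace LinearMap.BilinForm

variable {B : LinearMap.BilinForm K V}

theorem mem_orthogonal_of_apply_self_eq_zero [FiniteDimensional K V] (hB : B.IsRefl)
    {W : Submodule K V} (hW : finrank K W = finrank K (W ⊓ B.orthogonal W : Submodule K V) + 1)
    {v : V} (hvW : v ∈ W) (hvv : B v v = 0) : v ∈ B.orthogonal W := by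
  by_cases hv : v ∈ W ⊓ B.orthogonal W
  · exact hv.2
  rw [← sup_span_singleton_eq_of_finrank_eq_succ inf_le_left hW hvW hv]
  intro w hw
  obtain ⟨r, hr, _, hs, rfl⟩ := mem_sup.1 hw
  obtain ⟨c, rfl⟩ := mem_span_singleton.1 hs
  have hrv : B r v = 0 := hB _ _ (hr.2 v hvW)
  simp [hrv, hvv]

variable {x : Module.End K V}

theorem range_le_orthogonal_ker (hx : ∀ v w, B (x v) w + B v (x w) = 0) :
    range x ≤ B.orthogonal (ker x) := by
  rintro _ ⟨w, rfl⟩ u hu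
  simpa [mem_ker.1 hu] using hx u w

theorem orthogonal_ker_eq_range [FiniteDimensional K V] (hB : B.Nondegenerate)
    (hx : ∀ v w, B (x v) w + B v (x w) = 0) : B.orthogonal (ker x) = range x := by
  refine (eq_of_le_of_finrank_le (range_le_orthogonal_ker hx) ?_).symm
  have := x.finrank_range_add_finrank_ker
  rw [finrank_orthogonal hB]
  omega

theorem apply_apply_right_eq_apply_apply_left (hx : ∀ v w, B (x v) w + B v (x w) = 0)
    (v w : V) : B v (x (x w)) = B (x (x v)) w := by
  linear_combination hx v (x w) - hx (x v) w

theorem apply_mem_ker_inf_range_of_mem_orthogonal (hB : B.SeparatingRight)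
    (hx : ∀ v w, B (x v) w + B v (x w) = 0) (hx3 : x ^ 3 = 0) {v : V}
    (hv : v ∈ B.orthogonal (ker x ⊓ range x)) : x v ∈ ker x ⊓ range x := by
  refine ⟨hB _ fun w => ?_, mem_range_self x v⟩
  rw [apply_apply_right_eq_apply_apply_left hx]
  refine hv _ ⟨?_, mem_range_self x (x w)⟩
  simpa [pow_succ, Module.End.mul_apply] using LinearMap.congr_fun hx3 w

end LinearMap.BilinForm

end

open LinearMap.BilinForm

theorem unique_isotropic_flag_typeB_general
    (n k : ℕ)
    (hnk : 3 * k = 2 * n + 2)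
    (V : Type*) [AddCommGroup V] [Module ℂ V] [FiniteDimensional ℂ V]
    (hdim : Module.finrank ℂ V = 2 * n + 1)
    (B : LinearMap.BilinForm ℂ V)
    (hsymm : ∀ v w : V, B v w = B w v)
    (hnd : B.Nondegenerate)
    (x : V →ₗ[ℂ] V)
    (hskew : ∀ v w : V, B (x v) w + B v (x w) = 0)
    (hx3 : x ^ 3 = 0)
    (hrk2 : Module.finrank ℂ (LinearMap.range (x ^ 2)) = k - 2)
    (hrk1 : Module.finrank ℂ (LinearMap.range x) = 2 * k - 2) :
    ∃! F : Submodule ℂ V × Submodule ℂ V,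
      F.1 ≤ F.2 ∧
      Module.finrank ℂ F.1 = k ∧
      F.2 = B.orthogonal F.1 ∧
      (∀ v ∈ F.1, x v = 0) ∧
      (∀ v ∈ F.2, x v ∈ F.1) ∧
      (∀ v : V, x v ∈ F.2) := by
  have hker : B.orthogonal (ker x) = range x := orthogonal_ker_eq_range hnd hskew
  have hrank : finrank ℂ (range x) + finrank ℂ (ker x) = finrank ℂ V :=
    x.finrank_range_add_finrank_ker
  have hrank_sq : finrank ℂ (range (x ^ 2)) + finrank ℂ (ker x ⊓ range x : Submodule ℂ V) =
      finrank ℂ (range x) := by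
    rw [pow_two, Module.End.mul_eq_comp, range_comp]
    exact finrank_map_add_finrank_ker_inf x (range x)
  have hR : finrank ℂ (ker x ⊓ range x : Submodule ℂ V) = k := by omega
  have hRker : finrank ℂ (ker x) =
      finrank ℂ (ker x ⊓ B.orthogonal (ker x) : Submodule ℂ V) + 1 := by
    rw [hker]
    omega
  have hrange_le : range x ≤ B.orthogonal (ker x ⊓ range x) :=
    hker ▸ B.orthogonal_le inf_le_left
  refine ⟨(ker x ⊓ range x, B.orthogonal (ker x ⊓ range x)),
    ⟨inf_le_right.trans hrange_le, hR, rfl, fun v hv => hv.1,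
      fun v => apply_mem_ker_inf_range_of_mem_orthogonal hnd.2 hskew hx3,
      fun v => hrange_le (mem_range_self x v)⟩, ?_⟩
  rintro ⟨F₁, F₂⟩ ⟨hF₁₂, hF₁, hF₂ : F₂ = B.orthogonal F₁, hxF₁, -, -⟩
  subst hF₂
  have hF₁R : F₁ ≤ ker x ⊓ range x := fun v hv => ⟨hxF₁ v hv, hker ▸
    mem_orthogonal_of_apply_self_eq_zero (fun v w h => hsymm v w ▸ h) hRker (hxF₁ v hv)
      ((hF₁₂ hv : v ∈ B.orthogonal F₁) v hv)⟩
  obtain rfl : F₁ = ker x ⊓ range x := eq_of_le_of_finrank_eq hF₁R (hF₁.trans hR.symm)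
  rfl

/-- **Type Bₙ case of the key step of Proposition 3.1** (Namikawa,
"Birational geometry of symplectic resolutions of nilpotent orbits").
Let `n, k > 0` with `k` even and `3k = 2n + 2`.  Let `V` be a complex vector
space of dimension `2n + 1` with a nondegenerate symmetric bilinear form `B`,
and let `x` be a `B`-skew-adjoint nilpotent endomorphism of Jordan type
`[3^{k-2}, 2^2, 1]`, i.e. `x³ = 0`, `rank x² = k - 2` and `rank x = 2k - 2`.
Then there is exactly one pair `(F₁, F₂)` of subspaces with `F₁ ⊆ F₂`,
`dim F₁ = k`, `F₂ = F₁^⊥`, `x F₁ = 0`, `x F₂ ⊆ F₁` and `x V ⊆ F₂`. -/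
theorem unique_isotropic_flag_typeB
    (n k : ℕ) (hn : 0 < n) (hk : 0 < k) (hkeven : Even k)
    (hnk : 3 * k = 2 * n + 2)
    (V : Type*) [AddCommGroup V] [Module ℂ V] [FiniteDimensional ℂ V]
    (hdim : Module.finrank ℂ V = 2 * n + 1)
    (B : LinearMap.BilinForm ℂ V)
    (hsymm : ∀ v w : V, B v w = B w v)
    (hnd : B.Nondegenerate)
    (x : V →ₗ[ℂ] V)
    (hskew : ∀ v w : V, B (x v) w + B v (x w) = 0)
    (hx3 : x ^ 3 = 0)
    (hrk2 : Module.finrank ℂ (LinearMap.range (x ^ 2)) = k - 2)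
    (hrk1 : Module.finrank ℂ (LinearMap.range x) = 2 * k - 2) :
    ∃! F : Submodule ℂ V × Submodule ℂ V,
      F.1 ≤ F.2 ∧
      Module.finrank ℂ F.1 = k ∧
      F.2 = B.orthogonal F.1 ∧
      (∀ v ∈ F.1, x v = 0) ∧
      (∀ v ∈ F.2, x v ∈ F.1) ∧
      (∀ v : V, x v ∈ F.2) :=
  unique_isotropic_flag_typeB_general n k hnk V hdim B hsymm hnd x hskew hx3 hrk2 hrk1
end

section
/- Let n and k be positive integers with k odd, k ≤ n - 2, and 3k = 2n + 1. Let V be a complex vector space of dimension 2n equipped with a nondegenerate symmetric bilinear form B, and let x be a B-skew-adjoint nilpotent endomorphism of V of Jordan type [3^{k-2}, 2^2, 1] (equivalently, x^3 = 0, rank(x^2) = k - 2, and rank(x) = 2k - 2). Then there exists exactly one pair (F_1, F_2) of linear subspaces of V such that F_1 ⊆ F_2, dim F_1 = k, F_2 is the orthogonal complement of F_1 with respect to B, x(F_1) = 0, x(F_2) ⊆ F_1, and x(V) ⊆ F_2. -/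
/-!
The flag is forced to be `F₁ = ker x ⊓ range x`. Skew-adjointness makes `ker x` and `range x`
orthogonal complements of each other, and `ker x²` the orthogonal of `range x²`; since `x³ = 0`
gives `range x² ≤ F₁`, the pair `(F₁, F₁ᗮ)` has all required properties, and rank counting gives
`dim F₁ = rk x - rk x² = k` and `dim ker x = k + 1`. Conversely, an isotropic `k`-dimensional
`G ≤ ker x` different from `F₁` spans `ker x` together with `F₁`; being orthogonal to both, `G`
lies in `(ker x)ᗮ = range x`, hence in `F₁`.
-/

open Module LinearMap

section Rank

variable {K V : Type*} [DivisionRing K] [AddCommGroup V] [Module K V] [FiniteDimensional K V]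

theorem Submodule.finrank_inf_ker_add_finrank_map {W : Type*} [AddCommGroup W] [Module K W]
    (f : V →ₗ[K] W) (p : Submodule K V) :
    finrank K ↥(p ⊓ ker f) + finrank K (p.map f) = finrank K p := by
  have h := finrank_range_add_finrank_ker (f.domRestrict p)
  rwa [range_domRestrict, ker_domRestrict, ← Submodule.finrank_map_subtype_eq,
    Submodule.map_comap_subtype, add_comm] at h

theorem Submodule.le_or_sup_eq_of_finrank_le_succ {p q N : Submodule K V} (hp : p ≤ N)
    (hq : q ≤ N) (hN : finrank K N ≤ finrank K q + 1) : p ≤ q ∨ p ⊔ q = N := by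
  refine or_iff_not_imp_left.mpr fun hpq => Submodule.eq_of_le_of_finrank_le (sup_le hp hq) ?_
  have := Submodule.finrank_lt_finrank_of_lt (right_lt_sup.mpr hpq)
  omega

theorem Module.End.finrank_ker_inf_range_add_finrank_range_sq (x : Module.End K V) :
    finrank K ↥(ker x ⊓ range x) + finrank K (range (x ^ 2)) = finrank K (range x) := by
  rw [inf_comm, sq, Module.End.mul_eq_comp, range_comp,
    Submodule.finrank_inf_ker_add_finrank_map]

end Rank

section BilinForm

variable {K V : Type*} [Field K] [AddCommGroup V] [Module K V] {B : LinearMap.BilinForm K V}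

namespace LinearMap.IsAdjointPair

variable {f g : Module.End K V}

theorem ker_le_orthogonal_range (h : IsAdjointPair B B f g) :
    ker g ≤ B.orthogonal (range f) := by
  rintro m hm _ ⟨v, rfl⟩
  rw [h v m, mem_ker.mp hm, map_zero]

theorem range_le_orthogonal_ker (h : IsAdjointPair B B f g) :
    range g ≤ B.orthogonal (ker f) := by
  rintro _ ⟨v, rfl⟩ m hm
  rw [← h m v, mem_ker.mp hm, map_zero, zero_apply]

variable [FiniteDimensional K V]

theorem orthogonal_range_eq_ker (hB : B.Nondegenerate) (h : IsAdjointPair B B f g)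
    (hrk : finrank K (range g) ≤ finrank K (range f)) : B.orthogonal (range f) = ker g := by
  refine (Submodule.eq_of_le_of_finrank_le h.ker_le_orthogonal_range ?_).symm
  have := finrank_range_add_finrank_ker f
  have := finrank_range_add_finrank_ker g
  rw [BilinForm.finrank_orthogonal hB]
  omega

theorem orthogonal_ker_eq_range (hB : B.Nondegenerate) (h : IsAdjointPair B B f g)
    (hrk : finrank K (range f) ≤ finrank K (range g)) : B.orthogonal (ker f) = range g := by
  refine (Submodule.eq_of_le_of_finrank_le h.range_le_orthogonal_ker ?_).symm
  have := finrank_range_add_finrank_ker f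
  rw [BilinForm.finrank_orthogonal hB]
  omega

end LinearMap.IsAdjointPair

namespace LinearMap.IsSkewAdjoint

variable {x : Module.End K V}

theorem isAdjointPair (hx : IsSkewAdjoint B x) : IsAdjointPair B B x ⇑(-x) := hx

theorem ker_le_orthogonal_range (hx : IsSkewAdjoint B x) : ker x ≤ B.orthogonal (range x) :=
  ker_neg x ▸ hx.isAdjointPair.ker_le_orthogonal_range

theorem range_le_orthogonal_ker (hx : IsSkewAdjoint B x) : range x ≤ B.orthogonal (ker x) :=
  range_neg x ▸ hx.isAdjointPair.range_le_orthogonal_ker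

theorem ker_inf_range_le_orthogonal (hx : IsSkewAdjoint B x) :
    ker x ⊓ range x ≤ B.orthogonal (ker x ⊓ range x) :=
  inf_le_left.trans (hx.ker_le_orthogonal_range.trans (BilinForm.orthogonal_le inf_le_right))

theorem range_le_orthogonal_ker_inf_range (hx : IsSkewAdjoint B x) :
    range x ≤ B.orthogonal (ker x ⊓ range x) :=
  hx.range_le_orthogonal_ker.trans (BilinForm.orthogonal_le inf_le_left)

variable [FiniteDimensional K V]

theorem orthogonal_ker (hB : B.Nondegenerate) (hx : IsSkewAdjoint B x) :
    B.orthogonal (ker x) = range x :=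
  range_neg x ▸ hx.isAdjointPair.orthogonal_ker_eq_range hB (range_neg x ▸ le_rfl)

theorem orthogonal_range_sq (hB : B.Nondegenerate) (hx : IsSkewAdjoint B x) :
    B.orthogonal (range (x ^ 2)) = ker (x ^ 2) := by
  have h : IsAdjointPair B B ⇑(x ^ 2) ⇑(x ^ 2) := by
    simpa only [sq, neg_mul_neg] using hx.isAdjointPair.mul hx.isAdjointPair
  exact h.orthogonal_range_eq_ker hB le_rfl

theorem apply_mem_ker_inf_range_of_mem_orthogonal (hB : B.Nondegenerate)
    (hx : IsSkewAdjoint B x) (hx3 : x ^ 3 = 0) {v : V}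
    (hv : v ∈ B.orthogonal (ker x ⊓ range x)) : x v ∈ ker x ⊓ range x := by
  have hsq : range (x ^ 2) ≤ ker x ⊓ range x := by
    refine le_inf (range_le_ker_iff.mpr ?_) (sq x ▸ range_comp_le_range x x)
    rw [← Module.End.mul_eq_comp, ← pow_succ', hx3]
  have hv' : v ∈ ker (x ^ 2) := hx.orthogonal_range_sq hB ▸ BilinForm.orthogonal_le hsq hv
  exact ⟨mem_ker.mpr (by simpa only [mem_ker, sq, Module.End.mul_apply] using hv'),
    mem_range_self x v⟩

theorem le_ker_inf_range_of_le_orthogonal (hB : B.Nondegenerate) (hx : IsSkewAdjoint B x)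
    {G : Submodule K V} (hGker : G ≤ ker x) (hGiso : G ≤ B.orthogonal G)
    (hcodim : finrank K (ker x) ≤ finrank K ↥(ker x ⊓ range x) + 1) :
    G ≤ ker x ⊓ range x := by
  rcases Submodule.le_or_sup_eq_of_finrank_le_succ hGker inf_le_left hcodim with h | h
  · exact h
  refine le_inf hGker ?_
  rw [← hx.orthogonal_ker hB, ← h]
  intro g hg n hn
  have hperp : G ⊔ (ker x ⊓ range x) ≤ ker (B.flip g) :=
    sup_le (fun m hm => hGiso hg m hm)
      (fun m hm => hx.ker_le_orthogonal_range (hGker hg) m hm.2)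
  exact hperp hn

end LinearMap.IsSkewAdjoint

end BilinForm

theorem unique_isotropic_flag_typeD_general
    (n k : ℕ) (hkn : k ≤ n - 2)
    (hnk : 3 * k = 2 * n + 1)
    (V : Type*) [AddCommGroup V] [Module ℂ V] [FiniteDimensional ℂ V]
    (hdim : Module.finrank ℂ V = 2 * n)
    (B : LinearMap.BilinForm ℂ V)
    (hnd : B.Nondegenerate)
    (x : V →ₗ[ℂ] V)
    (hskew : ∀ v w : V, B (x v) w + B v (x w) = 0)
    (hx3 : x ^ 3 = 0)
    (hrk2 : Module.finrank ℂ (LinearMap.range (x ^ 2)) = k - 2)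
    (hrk1 : Module.finrank ℂ (LinearMap.range x) = 2 * k - 2) :
    ∃! F : Submodule ℂ V × Submodule ℂ V,
      F.1 ≤ F.2 ∧
      Module.finrank ℂ F.1 = k ∧
      F.2 = B.orthogonal F.1 ∧
      (∀ v ∈ F.1, x v = 0) ∧
      (∀ v ∈ F.2, x v ∈ F.1) ∧
      (∀ v : V, x v ∈ F.2) := by
  have hx : IsSkewAdjoint B x := fun v w => by
    rw [Pi.neg_apply, map_neg]
    exact eq_neg_of_add_eq_zero_left (hskew v w)
  have hker : finrank ℂ (ker x) = k + 1 := by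
    have := finrank_range_add_finrank_ker x
    omega
  have hP : finrank ℂ ↥(ker x ⊓ range x) = k := by
    have := Module.End.finrank_ker_inf_range_add_finrank_range_sq x
    omega
  refine ⟨(ker x ⊓ range x, B.orthogonal (ker x ⊓ range x)),
    ⟨hx.ker_inf_range_le_orthogonal, hP, rfl, fun v hv => hv.1,
      fun v hv => hx.apply_mem_ker_inf_range_of_mem_orthogonal hnd hx3 hv,
      fun v => hx.range_le_orthogonal_ker_inf_range (mem_range_self x v)⟩, ?_⟩
  rintro ⟨G, G'⟩ ⟨hGiso, hG : finrank ℂ G = k, hG' : G' = B.orthogonal G, hGker, -, -⟩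
  subst hG'
  have hle := hx.le_ker_inf_range_of_le_orthogonal hnd hGker hGiso (by omega)
  obtain rfl : G = ker x ⊓ range x := Submodule.eq_of_le_of_finrank_le hle (by omega)
  rfl

/-- **Type Dₙ case of the key step of Proposition 3.1** (Namikawa,
"Birational geometry of symplectic resolutions of nilpotent orbits").
Let `n, k > 0` with `k` odd, `k ≤ n - 2` and `3k = 2n + 1`.  Let `V` be a
complex vector space of dimension `2n` with a nondegenerate symmetric bilinear
form `B`, and let `x` be a `B`-skew-adjoint nilpotent endomorphism of Jordan
type `[3^{k-2}, 2^2, 1]`, i.e. `x³ = 0`, `rank x² = k - 2`, `rank x = 2k - 2`.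
Then there is exactly one pair `(F₁, F₂)` of subspaces with `F₁ ⊆ F₂`,
`dim F₁ = k`, `F₂ = F₁^⊥`, `x F₁ = 0`, `x F₂ ⊆ F₁` and `x V ⊆ F₂`. -/
theorem unique_isotropic_flag_typeD
    (n k : ℕ) (hn : 0 < n) (hk : 0 < k) (hkodd : Odd k) (hkn : k ≤ n - 2)
    (hnk : 3 * k = 2 * n + 1)
    (V : Type*) [AddCommGroup V] [Module ℂ V] [FiniteDimensional ℂ V]
    (hdim : Module.finrank ℂ V = 2 * n)
    (B : LinearMap.BilinForm ℂ V)
    (hsymm : ∀ v w : V, B v w = B w v)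
    (hnd : B.Nondegenerate)
    (x : V →ₗ[ℂ] V)
    (hskew : ∀ v w : V, B (x v) w + B v (x w) = 0)
    (hx3 : x ^ 3 = 0)
    (hrk2 : Module.finrank ℂ (LinearMap.range (x ^ 2)) = k - 2)
    (hrk1 : Module.finrank ℂ (LinearMap.range x) = 2 * k - 2) :
    ∃! F : Submodule ℂ V × Submodule ℂ V,
      F.1 ≤ F.2 ∧
      Module.finrank ℂ F.1 = k ∧
      F.2 = B.orthogonal F.1 ∧
      (∀ v ∈ F.1, x v = 0) ∧
      (∀ v ∈ F.2, x v ∈ F.1) ∧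
      (∀ v : V, x v ∈ F.2) :=
  unique_isotropic_flag_typeD_general n k hkn hnk V hdim B hnd x hskew hx3 hrk2 hrk1
end

section
/- Let n and k be positive integers with k odd and 3k = 2n - 1. Let V be a complex vector space of dimension 2n equipped with a nondegenerate alternating bilinear form B, and let x be a B-skew-adjoint nilpotent endomorphism of V of Jordan type [3^{k-1}, 2, 1^2] (equivalently, x^3 = 0, rank(x^2) = k - 1, and rank(x) = 2k - 1). Then there exists exactly one pair (F_1, F_2) of linear subspaces of V such that F_1 ⊆ F_2, dim F_1 = k, F_2 is the orthogonal complement of F_1 with respect to B, x(F_1) = 0, x(F_2) ⊆ F_1, and x(V) ⊆ F_2. -/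
/-! The flag is forced to be `F₁ = ker x ⊓ range x`, `F₂ = F₁ᗮ`. Skewness gives
`ker x = (range x)ᗮ` and `ker x² = (range x²)ᗮ`; hence `F₁` is isotropic, `range x ≤ F₂`, and,
since `range x² ≤ F₁` when `x³ = 0`, also `x F₂ ≤ F₁`. Rank–nullity for `x` on `range x` gives
`dim F₁ = rank x - rank x² = k`.
Conversely, if `x Gᗮ ≤ G`, rank–nullity for `x` on `Gᗮ`, with `ker x ⊓ Gᗮ = (G ⊔ range x)ᗮ`,
gives `rank x ≤ 2 dim (G ⊓ range x)`. For `dim G = k` and `rank x = 2k - 1` this forces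
`G ≤ range x`, so `G ≤ F₁`, with equality by dimension. -/

open Module Submodule LinearMap LinearMap.BilinForm

namespace LinearMap

variable {K V W : Type*} [Field K] [AddCommGroup V] [Module K V] [AddCommGroup W] [Module K W]
  [FiniteDimensional K V]

theorem finrank_map_add_finrank_ker_inf (f : V →ₗ[K] W) (p : Submodule K V) :
    finrank K (p.map f) + finrank K (ker f ⊓ p : Submodule K V) = finrank K p := by
  have h := (f.domRestrict p).finrank_range_add_finrank_ker
  rwa [range_domRestrict, ker_domRestrict, ← finrank_map_subtype_eq, map_comap_subtype,
    inf_comm] at h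

theorem finrank_ker_inf_range_add_finrank_range_sq (x : V →ₗ[K] V) :
    finrank K (ker x ⊓ range x : Submodule K V) + finrank K (range (x ^ 2)) =
      finrank K (range x) := by
  rw [pow_two, Module.End.mul_eq_comp, range_comp, add_comm]
  exact finrank_map_add_finrank_ker_inf x (range x)

end LinearMap

namespace LinearMap.BilinForm

variable {K V : Type*} [Field K] [AddCommGroup V] [Module K V] {B : LinearMap.BilinForm K V}

theorem orthogonal_sup (N L : Submodule K V) :
    B.orthogonal (N ⊔ L) = B.orthogonal N ⊓ B.orthogonal L :=
  le_antisymm (le_inf (orthogonal_le le_sup_left) (orthogonal_le le_sup_right))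
    fun m ⟨hN, hL⟩ u hu => by
      obtain ⟨a, ha, b, hb, rfl⟩ := mem_sup.1 hu
      rw [map_add, LinearMap.add_apply, hN a ha, hL b hb, add_zero]

theorem ker_eq_orthogonal_range_of_isAdjointPair {f g : V →ₗ[K] V} (hB : B.SeparatingRight)
    (hfg : IsAdjointPair B B f g) : ker g = B.orthogonal (range f) := by
  ext m
  simp only [mem_ker, mem_orthogonal_iff, mem_range, forall_exists_index, forall_apply_eq_imp_iff]
  exact ⟨fun h w => by rw [hfg, h, map_zero], fun h => hB _ fun w => by rw [← hfg, h]⟩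

variable {x : V →ₗ[K] V}

theorem ker_eq_orthogonal_range_of_isSkewAdjoint (hB : B.SeparatingRight)
    (hx : B.IsSkewAdjoint x) : ker x = B.orthogonal (range x) := by
  rw [← ker_eq_orthogonal_range_of_isAdjointPair (g := -x) hB hx, ker_neg]

theorem ker_sq_eq_orthogonal_range_sq_of_isSkewAdjoint (hB : B.SeparatingRight)
    (hx : B.IsSkewAdjoint x) : ker (x ^ 2) = B.orthogonal (range (x ^ 2)) := by
  have hx2 := IsAdjointPair.mul (f := x) (g := -x) (f' := x) (g' := -x) hx hx
  rw [neg_mul_neg, ← pow_two] at hx2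
  exact ker_eq_orthogonal_range_of_isAdjointPair hB hx2

theorem ker_inf_range_le_orthogonal (hB : B.SeparatingRight) (hx : B.IsSkewAdjoint x) :
    ker x ⊓ range x ≤ B.orthogonal (ker x ⊓ range x) := fun _ hv _ hu =>
  (ker_eq_orthogonal_range_of_isSkewAdjoint hB hx ▸ hv.1) _ hu.2

theorem range_le_orthogonal_of_le_ker (hx : B.IsSkewAdjoint x) {G : Submodule K V}
    (hG : G ≤ ker x) : range x ≤ B.orthogonal G := by
  rintro _ ⟨a, rfl⟩ u hu
  have h := hx u a
  rwa [mem_ker.1 (hG hu), map_zero, LinearMap.zero_apply, Pi.neg_apply, map_neg, zero_eq_neg] at h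

theorem map_orthogonal_ker_inf_range_le (hB : B.SeparatingRight) (hx : B.IsSkewAdjoint x)
    (hx3 : x ^ 3 = 0) : (B.orthogonal (ker x ⊓ range x)).map x ≤ ker x ⊓ range x := by
  have hrange_sq : range (x ^ 2) ≤ ker x ⊓ range x := by
    rintro _ ⟨w, rfl⟩
    refine ⟨mem_ker.2 ?_, ?_⟩
    · rw [← Module.End.mul_apply, ← pow_succ', hx3, LinearMap.zero_apply]
    · rw [pow_two, Module.End.mul_apply]; exact mem_range_self x _
  rintro _ ⟨v, hv, rfl⟩
  have hv2 : v ∈ ker (x ^ 2) := by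
    rw [ker_sq_eq_orthogonal_range_sq_of_isSkewAdjoint hB hx]
    exact orthogonal_le hrange_sq hv
  refine ⟨mem_ker.2 ?_, mem_range_self x v⟩
  rwa [← Module.End.mul_apply, ← pow_two]

variable [FiniteDimensional K V]

theorem finrank_range_le_two_mul_finrank_inf_range (hB : B.Nondegenerate)
    (hx : B.IsSkewAdjoint x) {G : Submodule K V} (hG : (B.orthogonal G).map x ≤ G) :
    finrank K (range x) ≤ 2 * finrank K (G ⊓ range x : Submodule K V) := by
  have hrank_nullity := finrank_map_add_finrank_ker_inf x (B.orthogonal G)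
  rw [ker_eq_orthogonal_range_of_isSkewAdjoint hB.2 hx, ← orthogonal_sup, sup_comm,
    finrank_orthogonal hB, finrank_orthogonal hB] at hrank_nullity
  have hmap : finrank K ((B.orthogonal G).map x) ≤ finrank K (G ⊓ range x : Submodule K V) :=
    finrank_mono (le_inf hG map_le_range)
  have hsup_inf := Submodule.finrank_sup_add_finrank_inf_eq G (range x)
  have hsup_le := (G ⊔ range x).finrank_le
  have hG_le := G.finrank_le
  omega

theorem le_range_of_two_mul_finrank_le (hB : B.Nondegenerate) (hx : B.IsSkewAdjoint x)
    {G : Submodule K V} (hG : (B.orthogonal G).map x ≤ G)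
    (hGdim : 2 * finrank K G ≤ finrank K (range x) + 1) : G ≤ range x := by
  have hrank := finrank_range_le_two_mul_finrank_inf_range hB hx hG
  exact inf_eq_left.1 (eq_of_le_of_finrank_le inf_le_left (by omega))

end LinearMap.BilinForm

theorem unique_isotropic_flag_typeC_general
    (k : ℕ)
    (V : Type*) [AddCommGroup V] [Module ℂ V] [FiniteDimensional ℂ V]
    (B : LinearMap.BilinForm ℂ V)
    (hnd : B.Nondegenerate)
    (x : V →ₗ[ℂ] V)
    (hskew : ∀ v w : V, B (x v) w + B v (x w) = 0)
    (hx3 : x ^ 3 = 0)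
    (hrk2 : Module.finrank ℂ (LinearMap.range (x ^ 2)) = k - 1)
    (hrk1 : Module.finrank ℂ (LinearMap.range x) = 2 * k - 1) :
    ∃! F : Submodule ℂ V × Submodule ℂ V,
      F.1 ≤ F.2 ∧
      Module.finrank ℂ F.1 = k ∧
      F.2 = B.orthogonal F.1 ∧
      (∀ v ∈ F.1, x v = 0) ∧
      (∀ v ∈ F.2, x v ∈ F.1) ∧
      (∀ v : V, x v ∈ F.2) := by
  have hx : B.IsSkewAdjoint x := fun v w => by
    rw [Pi.neg_apply, map_neg, eq_neg_iff_add_eq_zero]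
    exact hskew v w
  have hF : finrank ℂ (ker x ⊓ range x : Submodule ℂ V) = k := by
    have := finrank_ker_inf_range_add_finrank_range_sq x
    omega
  refine ⟨(ker x ⊓ range x, B.orthogonal (ker x ⊓ range x)),
    ⟨ker_inf_range_le_orthogonal hnd.2 hx, hF, rfl, fun v hv => hv.1,
      fun v hv => map_orthogonal_ker_inf_range_le hnd.2 hx hx3 (mem_map_of_mem hv),
      fun v => range_le_orthogonal_of_le_ker hx inf_le_left (mem_range_self x v)⟩, ?_⟩
  rintro ⟨G, G₂⟩ ⟨-, hG, hG₂, hGker, hGmap, -⟩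
  obtain rfl : G₂ = B.orthogonal G := hG₂
  dsimp only at hG hGker hGmap
  have hG_le : G ≤ ker x ⊓ range x :=
    le_inf hGker
      (le_range_of_two_mul_finrank_le hnd hx (map_le_iff_le_comap.2 hGmap) (by omega))
  rw [eq_of_le_of_finrank_le hG_le (by omega)]

/-- **Type Cₙ case of the key step of Proposition 3.1** (Namikawa,
"Birational geometry of symplectic resolutions of nilpotent orbits").
Let `n, k > 0` with `k` odd and `3k = 2n - 1`.  Let `V` be a complex vector
space of dimension `2n` with a nondegenerate alternating bilinear form `B`,
and let `x` be a `B`-skew-adjoint nilpotent endomorphism of Jordan type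
`[3^{k-1}, 2, 1^2]`, i.e. `x³ = 0`, `rank x² = k - 1` and `rank x = 2k - 1`.
Then there is exactly one pair `(F₁, F₂)` of subspaces with `F₁ ⊆ F₂`,
`dim F₁ = k`, `F₂ = F₁^⊥`, `x F₁ = 0`, `x F₂ ⊆ F₁` and `x V ⊆ F₂`. -/
theorem unique_isotropic_flag_typeC
    (n k : ℕ) (hn : 0 < n) (hk : 0 < k) (hkodd : Odd k)
    (hnk : 3 * k = 2 * n - 1)
    (V : Type*) [AddCommGroup V] [Module ℂ V] [FiniteDimensional ℂ V]
    (hdim : Module.finrank ℂ V = 2 * n)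
    (B : LinearMap.BilinForm ℂ V)
    (halt : ∀ v : V, B v v = 0)
    (hnd : B.Nondegenerate)
    (x : V →ₗ[ℂ] V)
    (hskew : ∀ v w : V, B (x v) w + B v (x w) = 0)
    (hx3 : x ^ 3 = 0)
    (hrk2 : Module.finrank ℂ (LinearMap.range (x ^ 2)) = k - 1)
    (hrk1 : Module.finrank ℂ (LinearMap.range x) = 2 * k - 1) :
    ∃! F : Submodule ℂ V × Submodule ℂ V,
      F.1 ≤ F.2 ∧
      Module.finrank ℂ F.1 = k ∧
      F.2 = B.orthogonal F.1 ∧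
      (∀ v ∈ F.1, x v = 0) ∧
      (∀ v ∈ F.2, x v ∈ F.1) ∧
      (∀ v : V, x v ∈ F.2) :=
  unique_isotropic_flag_typeC_general k V B hnd x hskew hx3 hrk2 hrk1
end

section
/- Let V be a complex vector space of dimension 2n + 2 equipped with a nondegenerate symmetric bilinear form B, and let V' ⊆ V be a linear subspace of dimension 2n + 1 such that the restriction of B to V' is nondegenerate. If W ⊆ V is an isotropic subspace of dimension n + 1, then W ∩ V' is an isotropic subspace of V' of dimension n. -/
/-! An isotropic subspace of a nondegenerate space lies in its own orthogonal, whose dimension is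
the codimension of the subspace, so it has at most half the dimension of the space. Hence the
`(n + 1)`-dimensional isotropic `W` does not fit in the `(2n + 1)`-dimensional nondegenerate `V'`,
and since `V'` is a hyperplane, `W ∩ V'` is a hyperplane of `W`. -/

open Module

namespace LinearMap.BilinForm

variable {K V : Type*} [Field K] [AddCommGroup V] [Module K V] [FiniteDimensional K V]
  {B : LinearMap.BilinForm K V}

theorem two_mul_finrank_le_of_isotropic (hB : B.Nondegenerate) {W : Submodule K V}
    (hW : ∀ u ∈ W, ∀ v ∈ W, B u v = 0) : 2 * finrank K W ≤ finrank K V := by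
  have hle : W ≤ B.orthogonal W := fun v hv u hu ↦ hW u hu v hv
  have := Submodule.finrank_mono hle
  rw [finrank_orthogonal hB] at this
  have := Submodule.finrank_le W
  omega

theorem two_mul_finrank_le_of_isotropic_of_le {V' W : Submodule K V}
    (hV' : (B.restrict V').Nondegenerate) (hWV' : W ≤ V') (hW : ∀ u ∈ W, ∀ v ∈ W, B u v = 0) :
    2 * finrank K W ≤ finrank K V' := by
  rw [← (Submodule.comapSubtypeEquivOfLe hWV').finrank_eq]
  exact two_mul_finrank_le_of_isotropic hV' fun u hu v hv ↦ hW u hu v hv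

end LinearMap.BilinForm

theorem Submodule.finrank_inf_add_one_of_not_le {K V : Type*} [DivisionRing K] [AddCommGroup V]
    [Module K V] [FiniteDimensional K V] {H W : Submodule K V}
    (hH : finrank K H + 1 = finrank K V) (hWH : ¬ W ≤ H) :
    finrank K ↥(W ⊓ H) + 1 = finrank K W := by
  have hlt : H < W ⊔ H := lt_of_le_of_ne le_sup_right fun h ↦ hWH (h ▸ le_sup_left)
  have := Submodule.finrank_lt_finrank_of_lt hlt
  have := Submodule.finrank_le (W ⊔ H)
  have := Submodule.finrank_sup_add_finrank_inf_eq W H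
  omega

theorem isotropic_inter_hyperplane_general
    (n : ℕ)
    (V : Type*) [AddCommGroup V] [Module ℂ V] [FiniteDimensional ℂ V]
    (hdim : Module.finrank ℂ V = 2 * n + 2)
    (B : LinearMap.BilinForm ℂ V)
    (V' : Submodule ℂ V)
    (hV'dim : Module.finrank ℂ V' = 2 * n + 1)
    (hV'nd : (B.restrict V').Nondegenerate)
    (W : Submodule ℂ V)
    (hWiso : ∀ u ∈ W, ∀ v ∈ W, B u v = 0)
    (hWdim : Module.finrank ℂ W = n + 1) :
    (∀ u ∈ W ⊓ V', ∀ v ∈ W ⊓ V', B u v = 0) ∧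
      Module.finrank ℂ ↥(W ⊓ V') = n := by
  refine ⟨fun u hu v hv ↦ hWiso u hu.1 v hv.1, ?_⟩
  have hWV' : ¬ W ≤ V' := fun hle ↦ by
    have := LinearMap.BilinForm.two_mul_finrank_le_of_isotropic_of_le hV'nd hle hWiso
    omega
  have := Submodule.finrank_inf_add_one_of_not_le (by omega) hWV'
  omega

/-- **The correspondence underlying Example 3.4** (Namikawa).  Let `V` be a
complex vector space of dimension `2n + 2` with a nondegenerate symmetric
bilinear form `B`, and let `V' ⊆ V` be a subspace of dimension `2n + 1` on
which `B` restricts to a nondegenerate form.  If `W ⊆ V` is an isotropic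
subspace of dimension `n + 1`, then `W ∩ V'` is an isotropic subspace of `V'`
of dimension `n`. -/
theorem isotropic_inter_hyperplane
    (n : ℕ)
    (V : Type*) [AddCommGroup V] [Module ℂ V] [FiniteDimensional ℂ V]
    (hdim : Module.finrank ℂ V = 2 * n + 2)
    (B : LinearMap.BilinForm ℂ V)
    (hsymm : ∀ v w : V, B v w = B w v)
    (hnd : B.Nondegenerate)
    (V' : Submodule ℂ V)
    (hV'dim : Module.finrank ℂ V' = 2 * n + 1)
    (hV'nd : (B.restrict V').Nondegenerate)
    (W : Submodule ℂ V)
    (hWiso : ∀ u ∈ W, ∀ v ∈ W, B u v = 0)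
    (hWdim : Module.finrank ℂ W = n + 1) :
    (∀ u ∈ W ⊓ V', ∀ v ∈ W ⊓ V', B u v = 0) ∧
      Module.finrank ℂ ↥(W ⊓ V') = n :=
  isotropic_inter_hyperplane_general n V hdim B V' hV'dim hV'nd W hWiso hWdim
end

section
/- Let V be a complex vector space of dimension 2n + 2 equipped with a nondegenerate symmetric bilinear form B, and let V' ⊆ V be a linear subspace of dimension 2n + 1 such that the restriction of B to V' is nondegenerate. Then for every isotropic subspace U ⊆ V' of dimension n, there exist exactly two isotropic subspaces W ⊆ V of dimension n + 1 with W ∩ V' = U. -/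
/-!
Let `e` span the line `V'ᗮ`; then `B e e ≠ 0` and `V = V' ⊕ ⟨e⟩`. Inside `V'`, the space
`Uᗮ ∩ V'` has dimension `n + 1`, so it is `U ⊕ ⟨v⟩` for some `v`, and `B v v ≠ 0` because
otherwise `v` would be orthogonal to `Uᗮ = U ⊕ ⟨v⟩ ⊕ ⟨e⟩`, i.e. `v ∈ Uᗮᗮ = U`.
An isotropic `W` of dimension `n + 1` with `W ∩ V' = U` contains `U` and lies in `Uᗮ`, but not in
`V'`, so after rescaling it is `U ⊕ ⟨t v + e⟩` for a unique `t`. Such a subspace is isotropic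
exactly when `t² B(v, v) + B(e, e) = 0`, a quadratic equation with two distinct roots over `ℂ`.
-/

open Module Submodule

namespace Submodule

variable {k V : Type*} [DivisionRing k] [AddCommGroup V] [Module k V]

theorem smul_add_notMem {V' : Submodule k V} {v e : V} (hv : v ∈ V') (he : e ∉ V') (t : k) :
    t • v + e ∉ V' :=
  fun h => he (by simpa using sub_mem h (smul_mem _ t hv))

theorem sup_span_singleton_inf_eq {U V' : Submodule k V} {w : V} (hUV' : U ≤ V') (hw : w ∉ V') :
    (U ⊔ k ∙ w) ⊓ V' = U := by
  rw [sup_inf_assoc_of_le _ hUV', inf_comm, (disjoint_span_singleton_of_notMem hw).eq_bot,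
    sup_bot_eq]

theorem eq_sup_span_singleton_of_finrank_eq_succ [FiniteDimensional k V] {U W : Submodule k V}
    {w : V} (hUW : U ≤ W) (hwW : w ∈ W) (hwU : w ∉ U) (hW : finrank k W = finrank k U + 1) :
    W = U ⊔ k ∙ w :=
  (eq_of_le_of_finrank_le (sup_le hUW ((span_singleton_le_iff_mem _ _).mpr hwW))
    (by rw [hW, finrank_sup_span_singleton hwU])).symm

theorem exists_smul_add_mem_sup_span_singleton {U : Submodule k V} {v e w : V}
    (hw : w ∈ U ⊔ k ∙ v ⊔ k ∙ e) (hwU : w ∉ U ⊔ k ∙ v) :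
    ∃ t : k, t • v + e ∈ U ⊔ k ∙ w := by
  obtain ⟨y, hy, z, hz, rfl⟩ := mem_sup.mp hw
  obtain ⟨s, rfl⟩ := mem_span_singleton.mp hz
  obtain ⟨u, hu, z', hz', rfl⟩ := mem_sup.mp hy
  obtain ⟨a, rfl⟩ := mem_span_singleton.mp hz'
  have hs : s ≠ 0 := by
    rintro rfl
    exact hwU (by simpa using hy)
  refine ⟨s⁻¹ * a, ?_⟩
  have key : (s⁻¹ * a) • v + e = s⁻¹ • (u + a • v + s • e) - s⁻¹ • u := by
    rw [smul_add, smul_add, smul_smul, smul_smul, inv_mul_cancel₀ hs, one_smul]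
    abel
  rw [key]
  exact sub_mem (mem_sup_right (smul_mem _ _ (mem_span_singleton_self _)))
    (mem_sup_left (smul_mem _ _ hu))

theorem eq_of_sup_span_smul_add_eq {U V' : Submodule k V} {v e : V} (hUV' : U ≤ V')
    (hv : v ∈ V') (hvU : v ∉ U) (he : e ∉ V') {s t : k}
    (h : U ⊔ k ∙ (s • v + e) = U ⊔ k ∙ (t • v + e)) : s = t := by
  have hs : s • v + e ∈ U ⊔ k ∙ (t • v + e) := h ▸ mem_sup_right (mem_span_singleton_self _)
  have hmem : (s - t) • v ∈ (U ⊔ k ∙ (t • v + e)) ⊓ V' :=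
    ⟨by simpa [sub_smul] using sub_mem hs (mem_sup_right (mem_span_singleton_self _)),
      smul_mem _ _ hv⟩
  rw [sup_span_singleton_inf_eq hUV' (smul_add_notMem hv he t)] at hmem
  by_contra hst
  exact hvU ((smul_mem_iff _ (sub_ne_zero.mpr hst)).mp hmem)

end Submodule

namespace LinearMap.BilinForm

section CommRing

variable {R M : Type*} [CommRing R] [AddCommGroup M] [Module R M] {B : LinearMap.BilinForm R M}

def IsTotallyIsotropic (B : LinearMap.BilinForm R M) (W : Submodule R M) : Prop :=
  ∀ u ∈ W, ∀ v ∈ W, B u v = 0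

theorem isTotallyIsotropic_iff_le_orthogonal {W : Submodule R M} :
    B.IsTotallyIsotropic W ↔ W ≤ B.orthogonal W :=
  ⟨fun h _ hv _ hu => h _ hu _ hv, fun h _ hu _ hv => h hv _ hu⟩

theorem mem_orthogonal_sup_span_singleton_iff {P : Submodule R M} {x y : M} :
    y ∈ B.orthogonal (P ⊔ R ∙ x) ↔ y ∈ B.orthogonal P ∧ B x y = 0 := by
  have (N : Submodule R M) : y ∈ B.orthogonal N ↔ N ≤ LinearMap.ker (B.flip y) := Iff.rfl
  simp only [this, sup_le_iff, span_singleton_le_iff_mem]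
  rfl

theorem isTotallyIsotropic_sup_span_singleton (hB : B.IsRefl) {U : Submodule R M} {w : M}
    (hU : B.IsTotallyIsotropic U) (hw : w ∈ B.orthogonal U) (hww : B w w = 0) :
    B.IsTotallyIsotropic (U ⊔ R ∙ w) := by
  rw [isTotallyIsotropic_iff_le_orthogonal] at hU ⊢
  refine sup_le (fun u hu => ?_) ((span_singleton_le_iff_mem _ _).mpr ?_)
  · exact mem_orthogonal_sup_span_singleton_iff.mpr ⟨hU hu, hB _ _ (hw u hu)⟩
  · exact mem_orthogonal_sup_span_singleton_iff.mpr ⟨hw, hww⟩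

theorem apply_smul_add_self {v e : M} (hve : B v e = 0) (hev : B e v = 0) (t : R) :
    B (t • v + e) (t • v + e) = t ^ 2 * B v v + B e e := by
  simp only [map_add, map_smul, LinearMap.add_apply, LinearMap.smul_apply, smul_eq_mul, hve, hev]
  ring

end CommRing

variable {k V : Type*} [Field k] [AddCommGroup V] [Module k V] {B : LinearMap.BilinForm k V}
  [FiniteDimensional k V]

theorem exists_anisotropic_mem_orthogonal (hB : B.IsRefl) (hnd : B.Nondegenerate)
    {V' : Submodule k V} (hV' : (B.restrict V').Nondegenerate)
    (hdim : finrank k V = finrank k V' + 1) :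
    ∃ e ∈ B.orthogonal V', V' ⊔ k ∙ e = ⊤ ∧ B e e ≠ 0 := by
  have hL : finrank k (B.orthogonal V') = 1 := by rw [finrank_orthogonal hnd]; omega
  obtain ⟨e, heL, he0⟩ := (Submodule.ne_bot_iff _).mp (one_le_finrank_iff.mp hL.ge)
  have htop : V' ⊔ k ∙ e = ⊤ := eq_span_singleton_of_mem_of_finrank_eq_one hL heL he0 ▸
    (isCompl_orthogonal_of_restrict_nondegenerate hB hV').sup_eq_top
  refine ⟨e, heL, htop, fun hee => he0 ?_⟩
  have : e ∈ B.orthogonal (V' ⊔ k ∙ e) := mem_orthogonal_sup_span_singleton_iff.mpr ⟨heL, hee⟩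
  rwa [htop, orthogonal_top_eq_bot hnd, mem_bot] at this

theorem exists_orthogonal_eq_sup_span_singleton (hB : B.IsRefl) (hnd : B.Nondegenerate)
    {V' U : Submodule k V} {e : V} (he : e ∈ B.orthogonal V') (htop : V' ⊔ k ∙ e = ⊤)
    (hee : B e e ≠ 0) (hU : B.IsTotallyIsotropic U) (hUV' : U ≤ V')
    (hdim : finrank k V = 2 * finrank k U + 2) :
    ∃ v ∈ V', B.orthogonal U = U ⊔ k ∙ v ⊔ k ∙ e ∧ B v v ≠ 0 := by
  have heV' : e ∉ V' := fun h => hee (he e h)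
  have hsplit : B.orthogonal U = B.orthogonal U ⊓ V' ⊔ k ∙ e := by
    rw [inf_sup_assoc_of_le _ ((span_singleton_le_iff_mem _ _).mpr (orthogonal_le hUV' he)), htop,
      inf_top_eq]
  have hK : finrank k ↥(B.orthogonal U ⊓ V') = finrank k U + 1 := by
    have := finrank_sup_span_singleton (p := B.orthogonal U ⊓ V') fun h => heV' h.2
    rw [← hsplit, finrank_orthogonal hnd] at this
    omega
  have hUK : U ≤ B.orthogonal U ⊓ V' := le_inf (isTotallyIsotropic_iff_le_orthogonal.mp hU) hUV'
  obtain ⟨v, hvK, hvU⟩ := SetLike.exists_of_lt (hUK.lt_of_ne fun h => by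
    rw [← h] at hK
    omega)
  have hKv := eq_sup_span_singleton_of_finrank_eq_succ hUK hvK hvU hK
  refine ⟨v, hvK.2, hKv ▸ hsplit, fun hvv => hvU ?_⟩
  rw [← orthogonal_orthogonal hnd hB U, hsplit, hKv]
  simp only [mem_orthogonal_sup_span_singleton_iff]
  exact ⟨⟨hvK.1, hvv⟩, hB _ _ (he v hvK.2)⟩

theorem isTotallyIsotropic_extension_iff (hB : B.IsRefl) {U V' : Submodule k V} {v e : V}
    (hU : B.IsTotallyIsotropic U) (hUV' : U ≤ V') (hv : v ∈ V') (he : e ∉ V')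
    (hperp : B.orthogonal U = U ⊔ k ∙ v ⊔ k ∙ e) (W : Submodule k V) :
    (B.IsTotallyIsotropic W ∧ finrank k W = finrank k U + 1 ∧ W ⊓ V' = U) ↔
      ∃ t : k, B (t • v + e) (t • v + e) = 0 ∧ W = U ⊔ k ∙ (t • v + e) := by
  constructor
  · rintro ⟨hW, hWdim, hWV'⟩
    have hUW : U ≤ W := hWV' ▸ inf_le_left
    obtain ⟨w, hwW, hwV'⟩ : ∃ w ∈ W, w ∉ V' := by
      by_contra! hWle
      rw [inf_eq_left.mpr hWle] at hWV'
      rw [hWV'] at hWdim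
      omega
    have hwperp : w ∈ B.orthogonal U :=
      orthogonal_le hUW (isTotallyIsotropic_iff_le_orthogonal.mp hW hwW)
    rw [hperp] at hwperp
    obtain ⟨t, ht⟩ := exists_smul_add_mem_sup_span_singleton hwperp fun h =>
      hwV' (sup_le hUV' ((span_singleton_le_iff_mem _ _).mpr hv) h)
    have htW : t • v + e ∈ W := sup_le hUW ((span_singleton_le_iff_mem _ _).mpr hwW) ht
    exact ⟨t, hW _ htW _ htW, eq_sup_span_singleton_of_finrank_eq_succ hUW htW
      (fun h => smul_add_notMem hv he t (hUV' h)) hWdim⟩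
  · rintro ⟨t, ht, rfl⟩
    have hvperp : v ∈ B.orthogonal U :=
      hperp ▸ mem_sup_left (mem_sup_right (mem_span_singleton_self v))
    have heperp : e ∈ B.orthogonal U := hperp ▸ mem_sup_right (mem_span_singleton_self e)
    exact ⟨isTotallyIsotropic_sup_span_singleton hB hU (add_mem (smul_mem _ t hvperp) heperp) ht,
      finrank_sup_span_singleton fun h => smul_add_notMem hv he t (hUV' h),
      sup_span_singleton_inf_eq hUV' (smul_add_notMem hv he t)⟩

end LinearMap.BilinForm

open LinearMap.BilinForm in
/-- **The two-to-one correspondence of Example 3.4** (Namikawa).  Let `V` be a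
complex vector space of dimension `2n + 2` with a nondegenerate symmetric
bilinear form `B`, and let `V' ⊆ V` be a subspace of dimension `2n + 1` on
which `B` restricts to a nondegenerate form.  Then for every isotropic subspace
`U ⊆ V'` of dimension `n` there are exactly two isotropic subspaces `W ⊆ V` of
dimension `n + 1` with `W ∩ V' = U` (they lie in the two connected components
of the orthogonal Grassmannian). -/
theorem two_isotropic_extensions
    (n : ℕ)
    (V : Type*) [AddCommGroup V] [Module ℂ V] [FiniteDimensional ℂ V]
    (hdim : Module.finrank ℂ V = 2 * n + 2)
    (B : LinearMap.BilinForm ℂ V)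
    (hsymm : ∀ v w : V, B v w = B w v)
    (hnd : B.Nondegenerate)
    (V' : Submodule ℂ V)
    (hV'dim : Module.finrank ℂ V' = 2 * n + 1)
    (hV'nd : (B.restrict V').Nondegenerate)
    (U : Submodule ℂ V) (hUV' : U ≤ V')
    (hUiso : ∀ u ∈ U, ∀ v ∈ U, B u v = 0)
    (hUdim : Module.finrank ℂ U = n) :
    ∃ W₁ W₂ : Submodule ℂ V, W₁ ≠ W₂ ∧
      ∀ W : Submodule ℂ V,
        ((∀ u ∈ W, ∀ v ∈ W, B u v = 0) ∧
            Module.finrank ℂ W = n + 1 ∧ W ⊓ V' = U)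
          ↔ (W = W₁ ∨ W = W₂) := by
  subst hUdim
  have hB : B.IsRefl := fun v w h => by rwa [hsymm]
  obtain ⟨e, he, htop, hee⟩ := exists_anisotropic_mem_orthogonal hB hnd hV'nd (by omega)
  obtain ⟨v, hv, hperp, hvv⟩ :=
    exists_orthogonal_eq_sup_span_singleton hB hnd he htop hee hUiso hUV' hdim
  obtain ⟨x, hx⟩ := IsAlgClosed.exists_pow_nat_eq (-B e e / B v v) two_pos
  have hroots (t : ℂ) : B (t • v + e) (t • v + e) = 0 ↔ t = x ∨ t = -x := by
    rw [apply_smul_add_self (he v hv) (hB _ _ (he v hv)), ← sq_eq_sq_iff_eq_or_eq_neg, hx,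
      eq_div_iff hvv, eq_neg_iff_add_eq_zero]
  have hx0 : x ≠ 0 := by
    rintro rfl
    exact div_ne_zero (neg_ne_zero.mpr hee) hvv (by simpa using hx.symm)
  have heV' : e ∉ V' := fun h => hee (he e h)
  have hvU : v ∉ U := fun h => hvv (hUiso v h v h)
  refine ⟨U ⊔ ℂ ∙ (x • v + e), U ⊔ ℂ ∙ ((-x) • v + e), fun h => hx0 ?_, fun W => ?_⟩
  · exact self_eq_neg.mp (eq_of_sup_span_smul_add_eq hUV' hv hvU heV' h)
  · refine (isTotallyIsotropic_extension_iff hB hUiso hUV' hv heV' hperp W).trans ?_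
    simp only [hroots, or_and_right, exists_or, exists_eq_left]
end

section
/- Let Φ be a reduced crystallographic root system spanning a finite-dimensional real inner product space E, with Weyl group W generated by the reflections s_α, α ∈ Φ. Let Ψ ⊆ Φ be a parabolic subset, i.e. Ψ is closed (if α, β ∈ Ψ and α + β ∈ Φ then α + β ∈ Ψ) and Ψ ∪ (−Ψ) = Φ. If w ∈ W satisfies w(Ψ) = Ψ, then w lies in the subgroup of W generated by the reflections s_α with α ∈ Ψ ∩ (−Ψ). -/
open scoped RealInnerProductSpace Pointwise

variable {E : Type*} [NormedAddCommGroup E] [InnerProductSpace ℝ E]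

/-- The orthogonal reflection `s_α` in (the hyperplane orthogonal to) a root
`α`, as a map `E → E`. -/
noncomputable def reflectionMap (α v : E) : E :=
  v - (2 * ⟪α, v⟫ / ⟪α, α⟫) • α

/-- `Φ` is a reduced crystallographic root system spanning `E`. -/
structure IsRootSystem (Φ : Set E) : Prop where
  finite : Φ.Finite
  spans : Submodule.span ℝ Φ = ⊤
  nonzero : ∀ α ∈ Φ, α ≠ 0
  reflect_mem : ∀ α ∈ Φ, ∀ β ∈ Φ, reflectionMap α β ∈ Φ
  crystallographic : ∀ α ∈ Φ, ∀ β ∈ Φ, ∃ m : ℤ, 2 * ⟪α, β⟫ / ⟪α, α⟫ = m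
  reduced : ∀ α ∈ Φ, ∀ c : ℝ, c • α ∈ Φ → c = 1 ∨ c = -1

/-- The subgroup of `GL(E)` generated by the reflections `s_α`, `α ∈ S`.
Applied to `S = Φ` it gives the Weyl group `W` of `Φ`. -/
noncomputable def reflectionSubgroup (S : Set E) : Subgroup (E ≃ₗ[ℝ] E) :=
  Subgroup.closure {g : E ≃ₗ[ℝ] E | ∃ α ∈ S, ∀ v : E, g v = reflectionMap α v}

/-!
Start from any regular vector `u`. If some `u`-positive root lies outside the closed set `Ψ`, so
does a simple one, `α`; then `-α ∈ Ψ`, and replacing `u` by `s_α u` swaps `α` for `-α` while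
permuting the other positive roots, so fewer positive roots lie outside `Ψ`. Hence some chamber
has all its positive roots in `Ψ`. As `w` preserves `Ψ`, so does the chamber of `w u`, and the
same descent, now aimed at the positive roots of `u`, only reflects in roots `α` with `α` and
`-α` in `Ψ`: it yields `v` in the Levi Weyl group with `v w` preserving the positive roots of
`u`. By the exchange argument on words in simple reflections such an element of the Weyl group
is trivial, so `w = v⁻¹`.
-/

noncomputable def reflectionEquiv (α : E) : E ≃ₗ[ℝ] E :=
  (ℝ ∙ α)ᗮ.reflection.toLinearEquiv

section Reflection

variable (α : E)

theorem reflectionEquiv_apply (v : E) : reflectionEquiv α v = reflectionMap α v := by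
  change (ℝ ∙ α)ᗮ.reflection v = _
  rw [Submodule.reflection_orthogonal_apply, Submodule.reflection_singleton_apply, reflectionMap,
    real_inner_self_eq_norm_sq]
  simp only [RCLike.ofReal_real_eq_id, id]
  module

@[simp]
theorem reflectionEquiv_reflectionEquiv (v : E) : reflectionEquiv α (reflectionEquiv α v) = v :=
  (ℝ ∙ α)ᗮ.reflection_reflection v

@[simp]
theorem reflectionEquiv_mul_self : reflectionEquiv α * reflectionEquiv α = 1 :=
  LinearEquiv.ext (reflectionEquiv_reflectionEquiv α)

@[simp]
theorem reflectionEquiv_inv : (reflectionEquiv α)⁻¹ = reflectionEquiv α :=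
  inv_eq_of_mul_eq_one_right (reflectionEquiv_mul_self α)

@[simp]
theorem reflectionEquiv_self : reflectionEquiv α α = -α :=
  Submodule.reflection_orthogonalComplement_singleton_eq_neg α

@[simp]
theorem reflectionEquiv_neg : reflectionEquiv (-α) = reflectionEquiv α := by
  ext v
  simp [reflectionEquiv_apply, reflectionMap, neg_div]

@[simp]
theorem inner_reflectionEquiv_reflectionEquiv (v w : E) :
    ⟪reflectionEquiv α v, reflectionEquiv α w⟫ = ⟪v, w⟫ :=
  (ℝ ∙ α)ᗮ.reflection.inner_map_map v w

theorem reflectionEquiv_conj {g : E ≃ₗ[ℝ] E} (hg : ∀ v w, ⟪g v, g w⟫ = ⟪v, w⟫) :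
    reflectionEquiv (g α) = g * reflectionEquiv α * g⁻¹ := by
  ext v
  obtain ⟨v, rfl⟩ := g.surjective v
  rw [LinearEquiv.mul_apply, LinearEquiv.mul_apply, show g⁻¹ (g v) = v from g.symm_apply_apply v]
  simp only [reflectionEquiv_apply, reflectionMap, hg, map_sub, map_smul]

end Reflection

theorem reflectionSubgroup_eq_closure_image (S : Set E) :
    reflectionSubgroup S = Subgroup.closure (reflectionEquiv '' S) := by
  unfold reflectionSubgroup
  congr 1
  ext g
  constructor
  · rintro ⟨α, hα, h⟩
    exact ⟨α, hα, LinearEquiv.ext fun v => by rw [h, reflectionEquiv_apply]⟩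
  · rintro ⟨α, hα, rfl⟩
    exact ⟨α, hα, reflectionEquiv_apply α⟩

theorem reflectionEquiv_mem_reflectionSubgroup {S : Set E} {α : E} (hα : α ∈ S) :
    reflectionEquiv α ∈ reflectionSubgroup S := by
  rw [reflectionSubgroup_eq_closure_image]
  exact Subgroup.subset_closure (Set.mem_image_of_mem _ hα)

theorem reflectionSubgroup_mono {S T : Set E} (h : S ⊆ T) :
    reflectionSubgroup S ≤ reflectionSubgroup T := by
  rw [reflectionSubgroup_eq_closure_image, reflectionSubgroup_eq_closure_image]
  exact Subgroup.closure_mono (Set.image_mono h)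

noncomputable def reflectionWord (l : List E) : E ≃ₗ[ℝ] E :=
  (l.map reflectionEquiv).prod

@[simp]
theorem reflectionWord_nil : reflectionWord ([] : List E) = 1 := rfl

@[simp]
theorem reflectionWord_cons (α : E) (l : List E) :
    reflectionWord (α :: l) = reflectionEquiv α * reflectionWord l := by
  simp [reflectionWord]

@[simp]
theorem reflectionWord_append (l₁ l₂ : List E) :
    reflectionWord (l₁ ++ l₂) = reflectionWord l₁ * reflectionWord l₂ := by
  simp [reflectionWord]

theorem mem_reflectionSubgroup_iff {S : Set E} {w : E ≃ₗ[ℝ] E} :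
    w ∈ reflectionSubgroup S ↔ ∃ l : List E, (∀ α ∈ l, α ∈ S) ∧ reflectionWord l = w := by
  refine ⟨fun hw => ?_, ?_⟩
  · rw [reflectionSubgroup_eq_closure_image] at hw
    induction hw using Subgroup.closure_induction_left with
    | one => exact ⟨[], by simp⟩
    | mul_left _ hg _ _ ih | inv_mul_cancel _ hg _ _ ih =>
      obtain ⟨α, hα, rfl⟩ := hg
      obtain ⟨l, hl, rfl⟩ := ih
      exact ⟨α :: l, List.forall_mem_cons.2 ⟨hα, hl⟩, by simp⟩
  · rintro ⟨l, hl, rfl⟩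
    exact Subgroup.list_prod_mem _
      (List.forall_mem_map.2 fun α hα => reflectionEquiv_mem_reflectionSubgroup (hl α hα))

theorem inner_reflectionWord_reflectionWord (l : List E) (v w : E) :
    ⟪reflectionWord l v, reflectionWord l w⟫ = ⟪v, w⟫ := by
  induction l with
  | nil => rfl
  | cons α l ih => simp [LinearEquiv.mul_apply, ih]

theorem inner_map_map_of_mem_reflectionSubgroup {S : Set E} {w : E ≃ₗ[ℝ] E}
    (hw : w ∈ reflectionSubgroup S) (v v' : E) : ⟪w v, w v'⟫ = ⟪v, v'⟫ := by
  obtain ⟨l, -, rfl⟩ := mem_reflectionSubgroup_iff.mp hw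
  exact inner_reflectionWord_reflectionWord l v v'

namespace IsRootSystem

variable {Φ : Set E}

theorem inner_self_pos (hΦ : IsRootSystem Φ) {α : E} (hα : α ∈ Φ) : 0 < ⟪α, α⟫ :=
  real_inner_self_pos.mpr (hΦ.nonzero α hα)

theorem reflectionEquiv_mem (hΦ : IsRootSystem Φ) {α β : E} (hα : α ∈ Φ) (hβ : β ∈ Φ) :
    reflectionEquiv α β ∈ Φ := by
  simpa [reflectionEquiv_apply] using hΦ.reflect_mem α hα β hβ

theorem neg_mem (hΦ : IsRootSystem Φ) {α : E} (hα : α ∈ Φ) : -α ∈ Φ := by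
  simpa using hΦ.reflectionEquiv_mem hα hα

theorem mapsTo_reflectionWord (hΦ : IsRootSystem Φ) {l : List E} (hl : ∀ α ∈ l, α ∈ Φ) :
    Set.MapsTo (reflectionWord l) Φ Φ := by
  induction l with
  | nil => exact Set.mapsTo_id Φ
  | cons α l ih =>
    rw [List.forall_mem_cons] at hl
    intro β hβ
    rw [reflectionWord_cons, LinearEquiv.mul_apply]
    exact hΦ.reflectionEquiv_mem hl.1 (ih hl.2 hβ)

theorem mapsTo_of_mem_reflectionSubgroup (hΦ : IsRootSystem Φ) {w : E ≃ₗ[ℝ] E}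
    (hw : w ∈ reflectionSubgroup Φ) : Set.MapsTo w Φ Φ := by
  obtain ⟨l, hl, rfl⟩ := mem_reflectionSubgroup_iff.mp hw
  exact hΦ.mapsTo_reflectionWord hl

theorem add_mem_or_le_of_inner_neg (hΦ : IsRootSystem Φ) {α β : E} (hα : α ∈ Φ) (hβ : β ∈ Φ)
    (hαβ : ⟪α, β⟫ < 0) : β + α ∈ Φ ∨ ⟪α, α⟫ ≤ -⟪α, β⟫ := by
  obtain ⟨m, hm⟩ := hΦ.crystallographic α hα β hβ
  have hA := hΦ.inner_self_pos hα
  have hm' : 2 * ⟪α, β⟫ = m * ⟪α, α⟫ := by rw [← hm]; field_simp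
  have hm0 : m < 0 := by
    have : (m : ℝ) * ⟪α, α⟫ < 0 := by linarith
    exact_mod_cast neg_of_mul_neg_left this hA.le
  rcases (show m = -1 ∨ m ≤ -2 by omega) with rfl | hm2
  · left
    have := hΦ.reflect_mem α hα β hβ
    rwa [reflectionMap, hm, Int.cast_neg, Int.cast_one, neg_one_smul, sub_neg_eq_add] at this
  · right
    have : (m : ℝ) ≤ -2 := by exact_mod_cast hm2
    nlinarith

theorem add_mem_of_inner_neg (hΦ : IsRootSystem Φ) {α β : E} (hα : α ∈ Φ) (hβ : β ∈ Φ)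
    (hαβ : ⟪α, β⟫ < 0) (hne : α + β ≠ 0) : α + β ∈ Φ := by
  rcases hΦ.add_mem_or_le_of_inner_neg hα hβ hαβ with h | hα'
  · rwa [add_comm]
  rcases hΦ.add_mem_or_le_of_inner_neg hβ hα (by rwa [real_inner_comm]) with h | hβ'
  · exact h
  have : ⟪α + β, α + β⟫ ≤ 0 := by
    rw [inner_add_add_self]
    linarith [real_inner_comm α β]
  exact absurd (real_inner_self_nonpos.mp this) hne

theorem sub_nsmul_mem (hΦ : IsRootSystem Φ) {α β : E} (hα : α ∈ Φ) (hβ : β ∈ Φ) (hne : β ≠ α)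
    {m : ℤ} (hm : 2 * ⟪α, β⟫ / ⟪α, α⟫ = m) {k : ℕ} (hk : (k : ℤ) ≤ m) :
    β - (k : ℝ) • α ∈ Φ := by
  have hA := hΦ.inner_self_pos hα
  have hm' : 2 * ⟪α, β⟫ = m * ⟪α, α⟫ := by rw [← hm]; field_simp
  -- while `2 j < m`, `⟪β - j • α, α⟫ > 0`, so one more `α` can be subtracted
  have lower : ∀ j : ℕ, 2 * (j : ℤ) ≤ m + 1 → β - (j : ℝ) • α ∈ Φ := by
    intro j
    induction j with
    | zero => exact fun _ => by simpa using hβ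
    | succ j ih =>
      intro hj
      have hj' : 2 * (j : ℝ) + 1 ≤ m := by exact_mod_cast (by omega : 2 * (j : ℤ) + 1 ≤ m)
      have hpos : ⟪β - (j : ℝ) • α, -α⟫ < 0 := by
        rw [inner_neg_right, inner_sub_left, real_inner_smul_left, real_inner_comm]
        nlinarith
      have hne' : β - (j : ℝ) • α + -α ≠ 0 := by
        intro h
        have hβ' : ((j : ℝ) + 1) • α = β := by
          rw [add_smul, one_smul]; linear_combination (norm := module) -h
        rcases hΦ.reduced α hα _ (hβ' ▸ hβ) with h1 | h1
        · exact hne (by rw [← hβ', h1, one_smul])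
        · linarith [(j.cast_nonneg : (0 : ℝ) ≤ j)]
      convert hΦ.add_mem_of_inner_neg (ih (by omega)) (hΦ.neg_mem hα) hpos hne' using 1
      push_cast
      module
  by_cases hk' : 2 * (k : ℤ) ≤ m + 1
  · exact lower k hk'
  -- the upper half of the string is the image of the lower half under `s_α`
  have := hΦ.reflectionEquiv_mem hα (lower (m - k).toNat (by omega))
  have hcast : (((m - k).toNat : ℕ) : ℝ) = m - k := by
    rw [← Int.cast_natCast, Int.toNat_of_nonneg (by omega)]
    push_cast
    ring
  convert this using 1
  rw [map_sub, map_smul, reflectionEquiv_self, reflectionEquiv_apply, reflectionMap, hm, hcast]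
  module

end IsRootSystem

def IsRegularVector (Φ : Set E) (u : E) : Prop :=
  ∀ α ∈ Φ, ⟪u, α⟫ ≠ 0

def positiveRoots (Φ : Set E) (u : E) : Set E :=
  {α ∈ Φ | 0 < ⟪u, α⟫}

def simpleRoots (Φ : Set E) (u : E) : Set E :=
  {α ∈ positiveRoots Φ u | ∀ β ∈ positiveRoots Φ u, ∀ γ ∈ positiveRoots Φ u, β + γ ≠ α}

theorem IsRootSystem.exists_isRegularVector {Φ : Set E} (hΦ : IsRootSystem Φ) :
    ∃ u, IsRegularVector Φ u := by
  have := hΦ.finite.to_subtype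
  obtain ⟨u, hu⟩ := Module.Dual.exists_forall_ne_zero_of_forall_exists (K := ℝ)
    (fun α : Φ => innerₛₗ ℝ (α : E)) fun α => ⟨α, (hΦ.inner_self_pos α.2).ne'⟩
  exact ⟨u, fun α hα => by rw [real_inner_comm]; exact hu ⟨α, hα⟩⟩

theorem Set.Finite.induction_on_inner {Φ : Set E} (hΦ : Φ.Finite) (u : E) {p : E → Prop}
    (h : ∀ β ∈ Φ, (∀ γ ∈ Φ, ⟪u, γ⟫ < ⟪u, β⟫ → p γ) → p β) : ∀ β ∈ Φ, p β :=
  fun _ hβ => (Set.wellFoundedOn_image.mp (hΦ.image (⟪u, ·⟫)).wellFoundedOn).induction hβ h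

section PositiveRoots

variable {Φ : Set E} {u : E}

theorem neg_notMem_positiveRoots {α : E} (hα : α ∈ positiveRoots Φ u) :
    -α ∉ positiveRoots Φ u := fun h => by
  have := h.2
  rw [inner_neg_right] at this
  linarith [hα.2]

theorem IsRegularVector.neg_mem_positiveRoots (hΦ : IsRootSystem Φ) (hu : IsRegularVector Φ u)
    {α : E} (hα : α ∈ Φ) (hαP : α ∉ positiveRoots Φ u) : -α ∈ positiveRoots Φ u := by
  refine ⟨hΦ.neg_mem hα, ?_⟩
  rw [inner_neg_right, neg_pos]
  exact (hu α hα).lt_or_gt.resolve_right fun h => hαP ⟨hα, h⟩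

theorem add_mem_positiveRoots {β γ : E} (hβ : β ∈ positiveRoots Φ u) (hγ : γ ∈ positiveRoots Φ u)
    (h : β + γ ∈ Φ) : β + γ ∈ positiveRoots Φ u := by
  refine ⟨h, ?_⟩
  rw [inner_add_right]
  linarith [hβ.2, hγ.2]

theorem positiveRoots_induction (hΦ : Φ.Finite) {p : E → Prop}
    (simple : ∀ α ∈ simpleRoots Φ u, p α)
    (add : ∀ β ∈ positiveRoots Φ u, ∀ γ ∈ positiveRoots Φ u, β + γ ∈ Φ → p β → p γ → p (β + γ)) :
    ∀ β ∈ positiveRoots Φ u, p β := by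
  suffices ∀ β ∈ Φ, β ∈ positiveRoots Φ u → p β from fun β hβ => this β hβ.1 hβ
  refine hΦ.induction_on_inner u fun β hβΦ ih hβ => ?_
  by_cases hs : β ∈ simpleRoots Φ u
  · exact simple β hs
  obtain ⟨γ, hγ, δ, hδ, rfl⟩ : ∃ γ ∈ positiveRoots Φ u, ∃ δ ∈ positiveRoots Φ u, γ + δ = β := by
    simpa [simpleRoots, hβ] using hs
  refine add γ hγ δ hδ hβΦ (ih γ hγ.1 ?_ hγ) (ih δ hδ.1 ?_ hδ) <;>
    · rw [inner_add_right]; linarith [hγ.2, hδ.2]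

theorem positiveRoots_subset_of_simpleRoots_subset (hΦ : Φ.Finite) {T : Set E}
    (hT : ∀ α ∈ T, ∀ β ∈ T, α + β ∈ Φ → α + β ∈ T) (hΔ : simpleRoots Φ u ⊆ T) :
    positiveRoots Φ u ⊆ T :=
  positiveRoots_induction hΦ hΔ fun β _ γ _ h hβ hγ => hT β hβ γ hγ h

theorem exists_mem_simpleRoots_inner_pos (hΦ : IsRootSystem Φ) {β : E}
    (hβ : β ∈ positiveRoots Φ u) : ∃ α ∈ simpleRoots Φ u, 0 < ⟪α, β⟫ := by
  have key : ∀ γ ∈ positiveRoots Φ u, 0 < ⟪γ, β⟫ → ∃ α ∈ simpleRoots Φ u, 0 < ⟪α, β⟫ := by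
    refine positiveRoots_induction hΦ.finite (fun α hα hαβ => ⟨α, hα, hαβ⟩) ?_
    intro γ _ δ _ _ hγ hδ h
    rw [inner_add_left] at h
    rcases lt_or_ge 0 ⟪γ, β⟫ with h' | h'
    · exact hγ h'
    · exact hδ (by linarith)
  exact key β hβ (hΦ.inner_self_pos hβ.1)

end PositiveRoots

section WeylGroupAction

variable {Φ : Set E} {w : E ≃ₗ[ℝ] E}

theorem positiveRoots_map (hΦ : IsRootSystem Φ) (hw : w ∈ reflectionSubgroup Φ) (u : E) :
    positiveRoots Φ (w u) = w '' positiveRoots Φ u := by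
  ext γ
  constructor
  · rintro ⟨hγ, hpos⟩
    refine ⟨w.symm γ, ⟨hΦ.mapsTo_of_mem_reflectionSubgroup (inv_mem hw) hγ, ?_⟩,
      w.apply_symm_apply γ⟩
    rwa [← inner_map_map_of_mem_reflectionSubgroup hw, w.apply_symm_apply]
  · rintro ⟨β, ⟨hβ, hpos⟩, rfl⟩
    exact ⟨hΦ.mapsTo_of_mem_reflectionSubgroup hw hβ,
      by rwa [inner_map_map_of_mem_reflectionSubgroup hw]⟩

theorem IsRegularVector.map (hΦ : IsRootSystem Φ) {u : E} (hu : IsRegularVector Φ u)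
    (hw : w ∈ reflectionSubgroup Φ) : IsRegularVector Φ (w u) := fun γ hγ => by
  have := hu (w.symm γ) (hΦ.mapsTo_of_mem_reflectionSubgroup (inv_mem hw) hγ)
  rwa [← inner_map_map_of_mem_reflectionSubgroup hw, w.apply_symm_apply] at this

end WeylGroupAction

section SimpleRoots

variable {Φ : Set E} {u : E}

theorem mapsTo_reflectionEquiv_positiveRoots_diff (hΦ : IsRootSystem Φ) (hu : IsRegularVector Φ u)
    {α : E} (hα : α ∈ simpleRoots Φ u) :
    Set.MapsTo (reflectionEquiv α) (positiveRoots Φ u \ {α}) (positiveRoots Φ u \ {α}) := by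
  rintro β ⟨hβ, hβα : β ≠ α⟩
  have hαP := hα.1
  refine ⟨?_, fun h => neg_notMem_positiveRoots hαP <| by
    rwa [← reflectionEquiv_reflectionEquiv α β, h, reflectionEquiv_self] at hβ⟩
  obtain ⟨m, hm⟩ := hΦ.crystallographic α hαP.1 β hβ.1
  rw [reflectionEquiv_apply, reflectionMap, hm]
  rcases le_or_gt m 0 with hm0 | hm0
  · have hmem := hΦ.reflect_mem α hαP.1 β hβ.1
    rw [reflectionMap, hm] at hmem
    refine ⟨hmem, ?_⟩
    rw [inner_sub_right, real_inner_smul_right]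
    nlinarith [hαP.2, hβ.2, (Int.cast_nonpos.mpr hm0 : (m : ℝ) ≤ 0)]
  lift m to ℕ using hm0.le
  -- walking down the `α`-string from `β`, a sign change would split `α` into two positive roots
  have key : ∀ k : ℕ, k ≤ m → β - (k : ℝ) • α ∈ positiveRoots Φ u := by
    intro k
    induction k with
    | zero => exact fun _ => by simpa using hβ
    | succ k ih =>
      intro hk
      have hk1 := hΦ.sub_nsmul_mem hαP.1 hβ.1 hβα hm (k := k + 1) (by omega)
      refine ⟨hk1, (hu _ hk1).lt_or_gt.resolve_left fun hneg => ?_⟩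
      have hneg' : -(β - ((k + 1 : ℕ) : ℝ) • α) ∈ positiveRoots Φ u :=
        hu.neg_mem_positiveRoots hΦ hk1 fun h => by linarith [h.2]
      exact hα.2 _ (ih (by omega)) _ hneg' (by push_cast; module)
  simpa using key m le_rfl

theorem positiveRoots_reflectionEquiv_subset (hΦ : IsRootSystem Φ) (hu : IsRegularVector Φ u)
    {α : E} (hα : α ∈ simpleRoots Φ u) :
    positiveRoots Φ (reflectionEquiv α u) ⊆ insert (-α) (positiveRoots Φ u \ {α}) := by
  rw [positiveRoots_map hΦ (reflectionEquiv_mem_reflectionSubgroup hα.1.1)]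
  rintro _ ⟨β, hβ, rfl⟩
  by_cases hβα : β = α
  · simp [hβα]
  · exact Or.inr (mapsTo_reflectionEquiv_positiveRoots_diff hΦ hu hα ⟨hβ, hβα⟩)

theorem reflectionEquiv_mem_reflectionSubgroup_simpleRoots (hΦ : IsRootSystem Φ)
    (hu : IsRegularVector Φ u) {β : E} (hβ : β ∈ Φ) :
    reflectionEquiv β ∈ reflectionSubgroup (simpleRoots Φ u) := by
  suffices key : ∀ β ∈ Φ, β ∈ positiveRoots Φ u →
      reflectionEquiv β ∈ reflectionSubgroup (simpleRoots Φ u) by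
    by_cases hβP : β ∈ positiveRoots Φ u
    · exact key β hβ hβP
    · rw [← reflectionEquiv_neg]
      exact key _ (hΦ.neg_mem hβ) (hu.neg_mem_positiveRoots hΦ hβ hβP)
  refine hΦ.finite.induction_on_inner u fun β _ ih hβ => ?_
  obtain ⟨α, hα, hαβ⟩ := exists_mem_simpleRoots_inner_pos hΦ hβ
  have hsα := reflectionEquiv_mem_reflectionSubgroup hα
  by_cases hβα : β = α
  · exact hβα ▸ hsα
  -- `s_α β` is a lower positive root, and `s_β` is the conjugate of `s_{s_α β}` by `s_α`
  have hγ := (mapsTo_reflectionEquiv_positiveRoots_diff hΦ hu hα ⟨hβ, hβα⟩).1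
  have hlt : ⟪u, reflectionEquiv α β⟫ < ⟪u, β⟫ := by
    have hc : 0 < 2 * ⟪α, β⟫ / ⟪α, α⟫ := by
      have := hΦ.inner_self_pos hα.1.1
      positivity
    rw [reflectionEquiv_apply, reflectionMap, inner_sub_right, real_inner_smul_right]
    nlinarith [hα.1.2]
  rw [← reflectionEquiv_reflectionEquiv α β,
    reflectionEquiv_conj _ (inner_reflectionEquiv_reflectionEquiv α), reflectionEquiv_inv]
  exact mul_mem (mul_mem hsα (ih _ hγ.1 hlt hγ)) hsα

theorem reflectionSubgroup_le_simpleRoots (hΦ : IsRootSystem Φ) (hu : IsRegularVector Φ u) :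
    reflectionSubgroup Φ ≤ reflectionSubgroup (simpleRoots Φ u) := by
  rw [reflectionSubgroup_eq_closure_image, Subgroup.closure_le]
  rintro _ ⟨β, hβ, rfl⟩
  exact reflectionEquiv_mem_reflectionSubgroup_simpleRoots hΦ hu hβ

theorem exists_eq_append_cons_of_reflectionWord_notMem (hΦ : IsRootSystem Φ)
    (hu : IsRegularVector Φ u) {l : List E} (hl : ∀ α ∈ l, α ∈ simpleRoots Φ u) {v : E}
    (hv : v ∈ positiveRoots Φ u) (h : reflectionWord l v ∉ positiveRoots Φ u) :
    ∃ l₁ α l₂, l = l₁ ++ α :: l₂ ∧ reflectionWord l₂ v = α := by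
  induction l with
  | nil => exact absurd hv h
  | cons α l ih =>
    rw [List.forall_mem_cons] at hl
    by_cases hl' : reflectionWord l v ∈ positiveRoots Φ u
    · refine ⟨[], α, l, rfl, ?_⟩
      by_contra hne
      rw [reflectionWord_cons, LinearEquiv.mul_apply] at h
      exact h (mapsTo_reflectionEquiv_positiveRoots_diff hΦ hu hl.1 ⟨hl', hne⟩).1
    · obtain ⟨l₁, β, l₂, rfl, hβ⟩ := ih hl.2 hl'
      exact ⟨α :: l₁, β, l₂, rfl, hβ⟩

theorem reflectionWord_eq_one_of_image_subset (hΦ : IsRootSystem Φ) (hu : IsRegularVector Φ u)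
    {l : List E} (hl : ∀ α ∈ l, α ∈ simpleRoots Φ u)
    (h : reflectionWord l '' positiveRoots Φ u ⊆ positiveRoots Φ u) : reflectionWord l = 1 := by
  induction hn : l.length using Nat.strong_induction_on generalizing l with
  | _ n ih =>
  rcases l.eq_nil_or_concat with rfl | ⟨l', α, rfl⟩
  · rfl
  rw [List.concat_eq_append] at hl h hn ⊢
  have hα : α ∈ simpleRoots Φ u := hl α (by simp)
  have hword : reflectionWord (l' ++ [α]) = reflectionWord l' * reflectionEquiv α := by simp
  -- the word `l'` sends the simple root `α` to a negative root, so some letter of `l'` cancels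
  have hnot : reflectionWord l' α ∉ positiveRoots Φ u := by
    have hwα := h ⟨α, hα.1, rfl⟩
    rw [hword, LinearEquiv.mul_apply, reflectionEquiv_self, map_neg] at hwα
    simpa using neg_notMem_positiveRoots hwα
  obtain ⟨l₁, β, l₂, rfl, hβ⟩ := exists_eq_append_cons_of_reflectionWord_notMem hΦ hu
    (fun a ha => hl a (by simp [ha])) hα.1 hnot
  have hconj : reflectionEquiv β = reflectionWord l₂ * reflectionEquiv α * (reflectionWord l₂)⁻¹ :=
    hβ ▸ reflectionEquiv_conj α (inner_reflectionWord_reflectionWord l₂)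
  have hshort : reflectionWord (l₁ ++ β :: l₂ ++ [α]) = reflectionWord (l₁ ++ l₂) := by
    rw [hword, reflectionWord_append, reflectionWord_cons, hconj, reflectionWord_append]
    simp [mul_assoc]
  rw [hshort] at h ⊢
  exact ih _ (by simp [← hn]) (fun a ha => hl a (by simp at ha ⊢; tauto)) h rfl

theorem eq_one_of_image_positiveRoots_subset (hΦ : IsRootSystem Φ) (hu : IsRegularVector Φ u)
    {w : E ≃ₗ[ℝ] E} (hw : w ∈ reflectionSubgroup Φ)
    (h : w '' positiveRoots Φ u ⊆ positiveRoots Φ u) : w = 1 := by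
  obtain ⟨l, hl, rfl⟩ := mem_reflectionSubgroup_iff.mp (reflectionSubgroup_le_simpleRoots hΦ hu hw)
  exact reflectionWord_eq_one_of_image_subset hΦ hu hl h

end SimpleRoots

theorem exists_mem_reflectionSubgroup_positiveRoots_subset {Φ : Set E} (hΦ : IsRootSystem Φ)
    {T Ψ : Set E} (hT : ∀ α ∈ T, ∀ β ∈ T, α + β ∈ Φ → α + β ∈ T)
    (hT_neg : ∀ α ∈ Φ, α ∉ T → -α ∈ T) (hTΨ : T ⊆ Ψ) {u : E} (hu : IsRegularVector Φ u)
    (huΨ : positiveRoots Φ u ⊆ Ψ) :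
    ∃ v ∈ reflectionSubgroup (Ψ ∩ -Ψ), positiveRoots Φ (v u) ⊆ T := by
  induction hn : (positiveRoots Φ u \ T).ncard using Nat.strong_induction_on generalizing u with
  | _ n ih =>
  by_cases hPT : positiveRoots Φ u ⊆ T
  · exact ⟨1, one_mem _, hPT⟩
  obtain ⟨α, hα, hαT⟩ : ∃ α ∈ simpleRoots Φ u, α ∉ T := by
    by_contra! h
    exact hPT (positiveRoots_subset_of_simpleRoots_subset hΦ.finite hT h)
  have hαP := hα.1
  have hnegα : -α ∈ T := hT_neg α hαP.1 hαT
  have hsα := reflectionEquiv_mem_reflectionSubgroup (S := Φ) hαP.1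
  have hsub := positiveRoots_reflectionEquiv_subset hΦ hu hα
  have hfin : (positiveRoots Φ u \ T).Finite := hΦ.finite.subset fun β hβ => hβ.1.1
  have hlt : (positiveRoots Φ (reflectionEquiv α u) \ T).ncard < n := by
    rw [← hn]
    refine Set.ncard_lt_ncard (LE.le.trans_ssubset ?_
      (Set.sdiff_singleton_ssubset.mpr ⟨hαP, hαT⟩)) hfin
    rintro γ ⟨hγ, hγT⟩
    rcases hsub hγ with rfl | ⟨hγP, hγα⟩
    · exact absurd hnegα hγT
    · exact ⟨⟨hγP, hγT⟩, hγα⟩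
  obtain ⟨v, hv, hvT⟩ := ih _ hlt (hu.map hΦ hsα)
    (hsub.trans (Set.insert_subset (hTΨ hnegα) (Set.sdiff_subset.trans huΨ))) rfl
  exact ⟨v * reflectionEquiv α, mul_mem hv (reflectionEquiv_mem_reflectionSubgroup
    ⟨huΨ hαP, Set.mem_neg.mpr (hTΨ hnegα)⟩), hvT⟩

theorem stabilizer_of_parabolic_subset_mem_levi_weyl_general
    (Φ : Set E) (hΦ : IsRootSystem Φ)
    (Ψ : Set E) (hΨΦ : Ψ ⊆ Φ)
    (hclosed : ∀ α ∈ Ψ, ∀ β ∈ Ψ, α + β ∈ Φ → α + β ∈ Ψ)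
    (hparabolic : Ψ ∪ (-Ψ) = Φ)
    (w : E ≃ₗ[ℝ] E) (hw : w ∈ reflectionSubgroup Φ)
    (hwΨ : ⇑w '' Ψ = Ψ) :
    w ∈ reflectionSubgroup (Ψ ∩ (-Ψ)) := by
  have hΨ_neg : ∀ α ∈ Φ, α ∉ Ψ → -α ∈ Ψ := fun α hα hαΨ => by
    rw [← hparabolic] at hα
    exact Set.mem_neg.mp (hα.resolve_left hαΨ)
  obtain ⟨u₀, hu₀⟩ := hΦ.exists_isRegularVector
  obtain ⟨v₀, hv₀, hPΨ⟩ := exists_mem_reflectionSubgroup_positiveRoots_subset hΦ hclosed hΨ_neg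
    hΨΦ hu₀ (Set.sep_subset Φ _)
  have hu := hu₀.map hΦ (reflectionSubgroup_mono Set.inter_subset_left hv₀)
  have hwPΨ : positiveRoots Φ (w (v₀ u₀)) ⊆ Ψ := by
    rw [positiveRoots_map hΦ hw, ← hwΨ]
    exact Set.image_mono hPΨ
  obtain ⟨v, hv, hvP⟩ := exists_mem_reflectionSubgroup_positiveRoots_subset hΦ
    (fun _ hβ _ hγ => add_mem_positiveRoots hβ hγ) (fun _ hα => hu.neg_mem_positiveRoots hΦ hα)
    hPΨ (hu.map hΦ hw) hwPΨ
  have hvw : v * w ∈ reflectionSubgroup Φ :=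
    mul_mem (reflectionSubgroup_mono (Set.inter_subset_left.trans hΨΦ) hv) hw
  have hvw_one : v * w = 1 :=
    eq_one_of_image_positiveRoots_subset hΦ hu hvw (positiveRoots_map hΦ hvw _ ▸ hvP)
  rw [eq_inv_of_mul_eq_one_right hvw_one]
  exact inv_mem hv

/-- **Root-system form of the key step in the proof of Proposition 2.2**
(Namikawa).  Let `Φ` be a reduced crystallographic root system spanning `E`
with Weyl group `W`, and let `Ψ ⊆ Φ` be a parabolic subset, i.e. `Ψ` is closed
(`α, β ∈ Ψ` and `α + β ∈ Φ` imply `α + β ∈ Ψ`) and `Ψ ∪ (−Ψ) = Φ`.  If `w ∈ W`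
satisfies `w(Ψ) = Ψ`, then `w` lies in the subgroup generated by the
reflections `s_α` with `α ∈ Ψ ∩ (−Ψ)`. -/
theorem stabilizer_of_parabolic_subset_mem_levi_weyl
    [FiniteDimensional ℝ E]
    (Φ : Set E) (hΦ : IsRootSystem Φ)
    (Ψ : Set E) (hΨΦ : Ψ ⊆ Φ)
    (hclosed : ∀ α ∈ Ψ, ∀ β ∈ Ψ, α + β ∈ Φ → α + β ∈ Ψ)
    (hparabolic : Ψ ∪ (-Ψ) = Φ)
    (w : E ≃ₗ[ℝ] E) (hw : w ∈ reflectionSubgroup Φ)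
    (hwΨ : ⇑w '' Ψ = Ψ) :
    w ∈ reflectionSubgroup (Ψ ∩ (-Ψ)) :=
  stabilizer_of_parabolic_subset_mem_levi_weyl_general Φ hΦ Ψ hΨΦ hclosed hparabolic w hw hwΨ
end
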